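/- arXiv:2009.03880 — 6 statements merged into one kernel-verified Lean document; each statement's English description precedes it below -/
import Mathlib

section
/- Let $a_i > 0$, $l_i \le u_i$, $\sum_i l_i \le R \le \sum_i u_i$, and suppose $\bar\delta$ satisfies $\sum_{i=1}^n \max(l_i, \min(a_i\bar\delta, u_i)) = R$. Then the point $\bar x$ with $\bar x_i = \max(l_i, \min(a_i\bar\delta, u_i))$ is the optimal solution of the problem $\min \sum_i \frac{1}{2} x_i^2/a_i$ subject to $\sum_i x_i = R$ and $l_i \le x_i \le u_i$ for all $i$. -/
lemma key_aux (a l u δ y : ℝ) (ha : 0 < a) (hlu : l ≤ u) (hy1 : l ≤ y) (hy2 : y ≤ u) :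
    (1/2) * (max l (min (a * δ) u))^2 / a + δ * (y - max l (min (a * δ) u))
      ≤ (1/2) * y^2 / a := by
  rcases le_total (a * δ) l with h1 | h1
  · rw [max_eq_left (le_trans (min_le_left _ _) h1)]
    rw [div_add' _ _ _ (ne_of_gt ha), div_le_div_iff₀ ha ha]
    nlinarith [sq_nonneg (y - l), mul_nonneg (mul_nonneg (sub_nonneg.2 h1) (sub_nonneg.2 hy1)) ha.le]
  · rcases le_total u (a * δ) with h2 | h2
    · rw [min_eq_right h2, max_eq_right hlu]
      rw [div_add' _ _ _ (ne_of_gt ha), div_le_div_iff₀ ha ha]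
      nlinarith [sq_nonneg (y - u), mul_nonneg (mul_nonneg (sub_nonneg.2 h2) (sub_nonneg.2 hy2)) ha.le]
    · rw [min_eq_left h2, max_eq_right h1]
      rw [div_add' _ _ _ (ne_of_gt ha), div_le_div_iff₀ ha ha]
      nlinarith [sq_nonneg (y - a * δ)]

theorem stmt_3 (n : ℕ) (a l u : Fin n → ℝ) (R δ : ℝ)
    (ha : ∀ i, 0 < a i) (hlu : ∀ i, l i ≤ u i)
    (hR1 : ∑ i, l i ≤ R) (hR2 : R ≤ ∑ i, u i)
    (hδ : ∑ i, max (l i) (min (a i * δ) (u i)) = R) :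
    (∑ i, max (l i) (min (a i * δ) (u i)) = R ∧
      ∀ i, l i ≤ max (l i) (min (a i * δ) (u i)) ∧
        max (l i) (min (a i * δ) (u i)) ≤ u i) ∧
    ∀ y : Fin n → ℝ, (∑ i, y i = R ∧ ∀ i, l i ≤ y i ∧ y i ≤ u i) →
      ∑ i, (1/2) * (max (l i) (min (a i * δ) (u i)))^2 / a i
        ≤ ∑ i, (1/2) * (y i)^2 / a i := by
  refine ⟨⟨hδ, fun i => ⟨le_max_left _ _,
    max_le (hlu i) (min_le_right _ _)⟩⟩, fun y ⟨hyR, hybox⟩ => ?_⟩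
  have key : ∀ i, (1/2) * (max (l i) (min (a i * δ) (u i)))^2 / a i
      + δ * (y i - max (l i) (min (a i * δ) (u i))) ≤ (1/2) * (y i)^2 / a i :=
    fun i => key_aux (a i) (l i) (u i) δ (y i) (ha i) (hlu i) (hybox i).1 (hybox i).2
  have hsum := Finset.sum_le_sum (s := Finset.univ) (fun i _ => key i)
  rw [Finset.sum_add_distrib, ← Finset.mul_sum, Finset.sum_sub_distrib, hyR, hδ,
    sub_self, mul_zero, add_zero] at hsum
  exact hsum
end

section
/- Fix $j \ge 1$, parameters $a \in \mathbb{R}^j_{>0}$, box bounds $l, u \in \mathbb{R}^j$, and nested bounds $L_k \le U_k$ for $k < j$. For $C \in \mathbb{R}$, let $x^j(C)$ denote the unique optimal solution of the problem: minimize $\sum_{i=1}^j \frac{1}{2} x_i^2/a_i$ subject to $\sum_{i=1}^j x_i = C$, $L_k \le \sum_{i=1}^k x_i \le U_k$ for all $k < j$, and $l_i \le x_i \le u_i$ for all $i \le j$. If $A \le B$ and both QRAP-NC$^j(A)$ and QRAP-NC$^j(B)$ are feasible, then $x^j_i(A) \le x^j_i(B)$ for every $i \le j$. -/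
/-- Feasibility for the restricted problem QRAP-NC with `n` variables and resource `C`. -/
def qrapncFeas (n : ℕ) (l u L U : Fin n → ℝ) (C : ℝ) (x : Fin n → ℝ) : Prop :=
  (∑ i, x i = C) ∧
  (∀ k : Fin n, (k : ℕ) + 1 < n →
    L k ≤ ∑ i ∈ Finset.Iic k, x i ∧ ∑ i ∈ Finset.Iic k, x i ≤ U k) ∧
  (∀ i, l i ≤ x i ∧ x i ≤ u i)

/-- Separable quadratic objective of QRAP-NC. -/
noncomputable def qrapObj (n : ℕ) (a x : Fin n → ℝ) : ℝ := ∑ i, (1/2) * (x i)^2 / a i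

/-- `x` is an optimal solution of QRAP-NC with `n` variables and resource `C`. -/
def qrapncOpt (n : ℕ) (a l u L U : Fin n → ℝ) (C : ℝ) (x : Fin n → ℝ) : Prop :=
  qrapncFeas n l u L U C x ∧
  ∀ y, qrapncFeas n l u L U C y → qrapObj n a x ≤ qrapObj n a y

/-!
Write `D q` for the sum of the first `q` coordinates of `xB - xA`, so that `D 0 = 0` and
`D j = B - A ≥ 0`. If `xB i < xA i`, then `D` drops from `q = i` to `q = i + 1`. Following `D`
to the left of `i` (when `D i > 0`) or to the right of `i + 1` (otherwise) up to its first sign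
change gives an index `m` with `xA m < xB m` such that `D` has constant strict sign on every
prefix that separates `m` from `i`. Moving a small amount `ε` from coordinate `i` to coordinate
`m` in `xA`, and from `m` to `i` in `xB`, moves every constrained quantity of each point towards
its value at the other point, so both stay feasible; by strict convexity of the separable
objective the sum of the two objective values strictly decreases, contradicting optimality.
-/

open Filter Topology
open scoped Interval

namespace Nat

theorem exists_not_and_forall_Ioc {p : ℕ → Prop} {a b : ℕ} (hab : a ≤ b) (ha : ¬p a)
    (hb : p b) : ∃ m, a ≤ m ∧ m < b ∧ ¬p m ∧ ∀ q ∈ Set.Ioc m b, p q := by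
  classical
  have hm : ¬p (Nat.findGreatest (¬p ·) b) := Nat.findGreatest_spec (P := (¬p ·)) hab ha
  refine ⟨_, Nat.le_findGreatest hab ha, ?_, hm, ?_⟩
  · exact (Nat.findGreatest_le b).lt_of_ne fun h => hm (by rwa [h])
  · rintro q ⟨hmq, hqb⟩
    exact not_not.mp (Nat.findGreatest_is_greatest hmq hqb)

theorem exists_forall_Icc_not_and {p : ℕ → Prop} {a b : ℕ} (hab : a ≤ b) (ha : ¬p a)
    (hb : p b) : ∃ m, a ≤ m ∧ m < b ∧ (∀ q ∈ Set.Icc a m, ¬p q) ∧ p (m + 1) := by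
  classical
  have hex : ∃ q, a ≤ q ∧ p q := ⟨b, hab, hb⟩
  obtain ⟨haf, hf⟩ := Nat.find_spec hex
  have hfb : Nat.find hex ≤ b := Nat.find_min' hex ⟨hab, hb⟩
  have haf' : a < Nat.find hex := haf.lt_of_ne fun h => ha (h ▸ hf)
  refine ⟨Nat.find hex - 1, by omega, by omega, ?_, by rwa [Nat.sub_add_cancel (by omega)]⟩
  rintro q ⟨haq, hqm⟩ hq
  exact Nat.find_min hex (by omega) ⟨haq, hq⟩

end Nat

section PrefixSum

variable {n : ℕ} (x : Fin n → ℝ)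

noncomputable def prefixSum (q : ℕ) : ℝ :=
  ∑ t ∈ Finset.univ.filter (fun t : Fin n => (t : ℕ) < q), x t

theorem prefixSum_zero : prefixSum x 0 = 0 := by
  simp [prefixSum]

theorem prefixSum_self : prefixSum x n = ∑ t, x t := by
  simp [prefixSum]

theorem sum_Iio_eq_prefixSum (k : Fin n) : ∑ t ∈ Finset.Iio k, x t = prefixSum x k := by
  unfold prefixSum
  congr 1
  ext t
  simp only [Finset.mem_Iio, Finset.mem_filter, Finset.mem_univ, true_and]
  rfl

theorem sum_Iic_eq_prefixSum (k : Fin n) : ∑ t ∈ Finset.Iic k, x t = prefixSum x (k + 1) := by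
  unfold prefixSum
  congr 1
  ext t
  simp only [Finset.mem_Iic, Finset.mem_filter, Finset.mem_univ, true_and, Nat.lt_succ_iff]
  rfl

theorem prefixSum_succ (k : Fin n) : prefixSum x (k + 1) = prefixSum x k + x k := by
  rw [← sum_Iic_eq_prefixSum, ← sum_Iio_eq_prefixSum, ← Finset.Iio_insert,
    Finset.sum_insert Finset.notMem_Iio_self, add_comm]

end PrefixSum

theorem exists_transfer_partner {n : ℕ} {x y : Fin n → ℝ} (hsum : ∑ t, x t ≤ ∑ t, y t)
    {i : Fin n} (hi : y i < x i) :
    ∃ m, x m < y m ∧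
      (∀ k, m ≤ k → k < i → 0 < ∑ t ∈ Finset.Iic k, (y t - x t)) ∧
      (∀ k, i ≤ k → k < m → ∑ t ∈ Finset.Iic k, (y t - x t) < 0) := by
  set D := prefixSum fun t => y t - x t
  have hD0 : D 0 = 0 := prefixSum_zero _
  have hDn : 0 ≤ D n := by
    simp only [D, prefixSum_self, Finset.sum_sub_distrib]
    linarith
  have hstep (k : Fin n) : D (k + 1) = D k + (y k - x k) := prefixSum_succ _ k
  simp_rw [sum_Iic_eq_prefixSum, Fin.le_def, Fin.lt_def]
  by_cases hDi : 0 < D i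
  · obtain ⟨m, -, hmi, hm, hpos⟩ :=
      Nat.exists_not_and_forall_Ioc (p := (0 < D ·)) (Nat.zero_le i) (by simp [hD0]) hDi
    lift m to Fin n using hmi.trans i.isLt
    refine ⟨m, ?_, fun k hmk hki => hpos _ ⟨by omega, by omega⟩, fun k hik hkm => by omega⟩
    linarith [hstep m, hpos (m + 1) ⟨by omega, by omega⟩]
  · have hDi' : D (i + 1) < 0 := by linarith [hstep i]
    obtain ⟨m, him, hmn, hneg, hm⟩ := Nat.exists_forall_Icc_not_and (p := (0 ≤ D ·))
      (Nat.succ_le_of_lt i.isLt) (not_le.mpr hDi') hDn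
    lift m to Fin n using hmn
    refine ⟨m, ?_, fun k hmk hki => by omega, fun k hik hkm => ?_⟩
    · linarith [hstep m, not_le.mp (hneg m ⟨him, le_rfl⟩)]
    · exact not_le.mp (hneg _ ⟨by omega, by omega⟩)

theorem mul_sub_nonneg_of_mem_uIcc {α : Type*} [CommRing α] [LinearOrder α]
    [IsStrictOrderedRing α] {c d : α} (h : d ∈ [[0, c]]) : 0 ≤ d * (c - d) := by
  rcases Set.mem_uIcc.mp h with ⟨h₀, hc⟩ | ⟨hc, h₀⟩
  · exact mul_nonneg h₀ (sub_nonneg.mpr hc)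
  · exact mul_nonneg_of_nonpos_of_nonpos h₀ (sub_nonpos.mpr hc)

theorem mul_sub_pos_of_mem_uIoo {α : Type*} [CommRing α] [LinearOrder α]
    [IsStrictOrderedRing α] {c d : α} (h : d ∈ Set.uIoo 0 c) : 0 < d * (c - d) := by
  rcases le_total 0 c with hc | hc
  · rw [Set.uIoo_of_le hc] at h
    exact mul_pos h.1 (sub_pos.mpr h.2)
  · rw [Set.uIoo_of_ge hc] at h
    exact mul_pos_of_neg_of_neg h.2 (sub_neg.mpr h.1)

section MovingTowardsEachOther

variable {n : ℕ} {x y δ : Fin n → ℝ}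

theorem qrapncFeas.add_and_sub {l u L U : Fin n → ℝ} {A B : ℝ}
    (hx : qrapncFeas n l u L U A x) (hy : qrapncFeas n l u L U B y) (hδ : ∑ t, δ t = 0)
    (hpre : ∀ k, ∑ t ∈ Finset.Iic k, δ t ∈ [[0, ∑ t ∈ Finset.Iic k, (y t - x t)]])
    (hcoord : ∀ t, δ t ∈ [[0, y t - x t]]) :
    qrapncFeas n l u L U A (x + δ) ∧ qrapncFeas n l u L U B (y - δ) := by
  have towards {a b d : ℝ} (h : d ∈ [[0, b - a]]) : a + d ∈ [[a, b]] ∧ b - d ∈ [[a, b]] := by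
    rcases Set.mem_uIcc.mp h with ⟨h₁, h₂⟩ | ⟨h₁, h₂⟩
    · exact ⟨Set.mem_uIcc_of_le (by linarith) (by linarith),
        Set.mem_uIcc_of_le (by linarith) (by linarith)⟩
    · exact ⟨Set.mem_uIcc_of_ge (by linarith) (by linarith),
        Set.mem_uIcc_of_ge (by linarith) (by linarith)⟩
  have hpre' (k : Fin n) := towards (by simpa only [Finset.sum_sub_distrib] using hpre k)
  simp only [qrapncFeas, Pi.add_apply, Pi.sub_apply, Finset.sum_add_distrib,
    Finset.sum_sub_distrib]
  refine ⟨⟨by rw [hx.1, hδ, add_zero], fun k hk => ?_, fun t => ?_⟩,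
    ⟨by rw [hy.1, hδ, sub_zero], fun k hk => ?_, fun t => ?_⟩⟩
  · exact Set.uIcc_subset_Icc (hx.2.1 k hk) (hy.2.1 k hk) (hpre' k).1
  · exact Set.uIcc_subset_Icc (hx.2.2 t) (hy.2.2 t) (towards (hcoord t)).1
  · exact Set.uIcc_subset_Icc (hx.2.1 k hk) (hy.2.1 k hk) (hpre' k).2
  · exact Set.uIcc_subset_Icc (hx.2.2 t) (hy.2.2 t) (towards (hcoord t)).2

theorem qrapObj_add_add_qrapObj_sub_lt {a : Fin n → ℝ} (ha : ∀ t, 0 < a t)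
    (hδ : ∀ t, δ t ∈ [[0, y t - x t]]) {t₀ : Fin n} (ht₀ : δ t₀ ∈ Set.uIoo 0 (y t₀ - x t₀)) :
    qrapObj n a (x + δ) + qrapObj n a (y - δ) < qrapObj n a x + qrapObj n a y := by
  have hgain : 0 < ∑ t, δ t * (y t - x t - δ t) / a t :=
    Finset.sum_pos' (fun t _ => div_nonneg (mul_sub_nonneg_of_mem_uIcc (hδ t)) (ha t).le)
      ⟨t₀, Finset.mem_univ _, div_pos (mul_sub_pos_of_mem_uIoo ht₀) (ha t₀)⟩
  have hsplit : qrapObj n a (x + δ) + qrapObj n a (y - δ)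
      = qrapObj n a x + qrapObj n a y - ∑ t, δ t * (y t - x t - δ t) / a t := by
    simp only [qrapObj, ← Finset.sum_add_distrib, ← Finset.sum_sub_distrib]
    refine Finset.sum_congr rfl fun t _ => ?_
    simp only [Pi.add_apply, Pi.sub_apply]
    ring
  linarith

end MovingTowardsEachOther

theorem eventually_transfer_mem_uIcc {n : ℕ} {x y : Fin n → ℝ} {m i : Fin n}
    (hm : x m < y m) (hi : y i < x i)
    (hup : ∀ k, m ≤ k → k < i → 0 < ∑ t ∈ Finset.Iic k, (y t - x t))
    (hdown : ∀ k, i ≤ k → k < m → ∑ t ∈ Finset.Iic k, (y t - x t) < 0) :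
    ∀ᶠ ε in 𝓝[>] (0 : ℝ),
      (∀ k, ∑ t ∈ Finset.Iic k, (Pi.single m ε - Pi.single i ε : Fin n → ℝ) t
        ∈ [[0, ∑ t ∈ Finset.Iic k, (y t - x t)]]) ∧
      (∀ t, (Pi.single m ε - Pi.single i ε : Fin n → ℝ) t ∈ [[0, y t - x t]]) ∧
      (Pi.single m ε - Pi.single i ε : Fin n → ℝ) m ∈ Set.uIoo 0 (y m - x m) := by
  have hmi : m ≠ i := by
    rintro rfl
    linarith
  have hpre (ε : ℝ) (k : Fin n) :
      ∑ t ∈ Finset.Iic k, (Pi.single m ε - Pi.single i ε : Fin n → ℝ) t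
        = (if m ≤ k then ε else 0) - (if i ≤ k then ε else 0) := by
    simp [Finset.sum_sub_distrib]
  have hk (k : Fin n) : ∀ᶠ ε in 𝓝[>] (0 : ℝ), (if m ≤ k then ε else 0) - (if i ≤ k then ε else 0)
      ∈ [[0, ∑ t ∈ Finset.Iic k, (y t - x t)]] := by
    by_cases hmk : m ≤ k <;> by_cases hik : i ≤ k
    · simp [hmk, hik]
    · filter_upwards [Ioo_mem_nhdsGT (hup k hmk (not_le.mp hik))] with ε hε
      simpa [hmk, hik] using Set.mem_uIcc_of_le hε.1.le hε.2.le
    · filter_upwards [Ioo_mem_nhdsGT (neg_pos.mpr (hdown k hik (not_le.mp hmk)))] with ε hε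
      simp only [hmk, hik, if_true, if_false, zero_sub]
      exact Set.mem_uIcc_of_ge (by linarith [hε.2]) (by linarith [hε.1])
    · simp [hmk, hik]
  filter_upwards [Ioo_mem_nhdsGT (sub_pos.mpr hm), Ioo_mem_nhdsGT (sub_pos.mpr hi),
    eventually_all.mpr hk] with ε hεm hεi hεk
  refine ⟨fun k => hpre ε k ▸ hεk k, fun t => ?_, ?_⟩
  · rcases eq_or_ne t m with rfl | htm
    · simpa [hmi] using Set.mem_uIcc_of_le hεm.1.le hεm.2.le
    rcases eq_or_ne t i with rfl | hti
    · simp only [Pi.sub_apply, Pi.single_eq_of_ne htm, Pi.single_eq_same, zero_sub]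
      exact Set.mem_uIcc_of_ge (by linarith [hεi.2]) (by linarith [hεi.1])
    · simp [htm, hti]
  · simpa [hmi] using Set.mem_uIoo_of_lt hεm.1 hεm.2

theorem qrapncOpt.false_of_transfer_partner {n : ℕ} {a l u L U x y : Fin n → ℝ} {A B : ℝ}
    {m i : Fin n} (ha : ∀ t, 0 < a t) (hx : qrapncOpt n a l u L U A x)
    (hy : qrapncOpt n a l u L U B y) (hm : x m < y m) (hi : y i < x i)
    (hup : ∀ k, m ≤ k → k < i → 0 < ∑ t ∈ Finset.Iic k, (y t - x t))
    (hdown : ∀ k, i ≤ k → k < m → ∑ t ∈ Finset.Iic k, (y t - x t) < 0) : False := by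
  obtain ⟨ε, hpre, hcoord, hgain⟩ := (eventually_transfer_mem_uIcc hm hi hup hdown).exists
  have hsum : ∑ t, (Pi.single m ε - Pi.single i ε : Fin n → ℝ) t = 0 := by
    simp [Finset.sum_sub_distrib]
  obtain ⟨hxδ, hyδ⟩ := qrapncFeas.add_and_sub hx.1 hy.1 hsum hpre hcoord
  linarith [hx.2 _ hxδ, hy.2 _ hyδ, qrapObj_add_add_qrapObj_sub_lt ha hcoord hgain]

theorem stmt_4_general (j : ℕ) (a l u L U : Fin j → ℝ) (A B : ℝ)
    (ha : ∀ i, 0 < a i)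
    (hAB : A ≤ B)
    (xA xB : Fin j → ℝ)
    (hxA : qrapncOpt j a l u L U A xA)
    (hxB : qrapncOpt j a l u L U B xB) :
    ∀ i, xA i ≤ xB i := by
  intro i
  by_contra! hi
  have hsum : ∑ t, xA t ≤ ∑ t, xB t := by
    rw [hxA.1.1, hxB.1.1]
    exact hAB
  obtain ⟨m, hm, hup, hdown⟩ := exists_transfer_partner hsum hi
  exact hxA.false_of_transfer_partner ha hxB hm hi hup hdown

theorem stmt_4 (j : ℕ) (hj : 1 ≤ j) (a l u L U : Fin j → ℝ) (A B : ℝ)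
    (ha : ∀ i, 0 < a i) (hlu : ∀ i, l i ≤ u i)
    (hLU : ∀ k : Fin j, (k : ℕ) + 1 < j → L k ≤ U k)
    (hAB : A ≤ B)
    (xA xB : Fin j → ℝ)
    (hxA : qrapncOpt j a l u L U A xA)
    (hxB : qrapncOpt j a l u L U B xB) :
    ∀ i, xA i ≤ xB i :=
  stmt_4_general j a l u L U A B ha hAB xA xB hxA hxB
end

section
/- Fix $j \ge 1$ and feasible QRAP-NC data as above with nested bounds defined for indices up to $j$. Let $x^j(C)$ denote the unique optimal solution of QRAP-NC$^j(C)$. For any $C \in [L_j, U_j]$ such that QRAP-NC$^{j+1}(C)$ is feasible, the optimal solution $x^{j+1}(C)$ of QRAP-NC$^{j+1}(C)$ satisfies $x^j_i(L_j) \le x^{j+1}_i(C) \le x^j_i(U_j)$ for all $i \le j$. -/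
namespace QRAPAux

noncomputable def psum {n : ℕ} (x : Fin n → ℝ) (t : ℕ) : ℝ :=
  ∑ i : Fin n, if (i : ℕ) < t then x i else 0

lemma psum_zero {n : ℕ} (x : Fin n → ℝ) : psum x 0 = 0 := by
  simp [psum]

lemma psum_succ {n : ℕ} (x : Fin n → ℝ) (t : ℕ) (ht : t < n) :
    psum x (t + 1) = psum x t + x ⟨t, ht⟩ := by
  unfold psum
  have : ∀ i : Fin n, (if (i:ℕ) < t + 1 then x i else 0)
      = (if (i:ℕ) < t then x i else 0) + (if i = ⟨t, ht⟩ then x i else 0) := by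
    intro i
    rcases lt_trichotomy (i:ℕ) t with h | h | h
    · have h1 : (i:ℕ) < t + 1 := by omega
      have h2 : i ≠ ⟨t, ht⟩ := by simp [Fin.ext_iff]; omega
      simp [h, h1, h2]
    · have h1 : i = ⟨t, ht⟩ := by simp [Fin.ext_iff, h]
      simp [h1, h]
    · have h1 : ¬ ((i:ℕ) < t + 1) := by omega
      have h2 : ¬ ((i:ℕ) < t) := by omega
      have h3 : i ≠ ⟨t, ht⟩ := by simp [Fin.ext_iff]; omega
      simp [h1, h2, h3]
  rw [Finset.sum_congr rfl (fun i _ => this i), Finset.sum_add_distrib,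
    Finset.sum_ite_eq' Finset.univ ⟨t, ht⟩ x]
  simp only [Finset.mem_univ, if_true]

lemma psum_univ {n : ℕ} (x : Fin n → ℝ) : psum x n = ∑ i, x i := by
  unfold psum
  apply Finset.sum_congr rfl
  intro i _
  simp [i.isLt]

lemma sum_Iic {n : ℕ} (x : Fin n → ℝ) (k : Fin n) :
    ∑ i ∈ Finset.Iic k, x i = psum x ((k : ℕ) + 1) := by
  unfold psum
  rw [← Finset.sum_filter]
  apply Finset.sum_congr _ (fun i _ => rfl)
  ext i
  simp only [Finset.mem_Iic, Finset.mem_filter, Finset.mem_univ, true_and, Fin.le_def]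
  omega

lemma psum_comb {n : ℕ} (x y z : Fin n → ℝ) (t : ℕ) :
    psum (fun i => x i + y i - z i) t = psum x t + psum y t - psum z t := by
  unfold psum
  rw [← Finset.sum_add_distrib, ← Finset.sum_sub_distrib]
  apply Finset.sum_congr rfl
  intro i _
  split <;> ring

lemma psum_pert {n : ℕ} (x : Fin n → ℝ) (p q : Fin n) (ε : ℝ) (t : ℕ) :
    psum (fun i => x i + (if i = p then ε else 0) + (if i = q then -ε else 0)) t
      = psum x t + (if (p : ℕ) < t then ε else 0) + (if (q : ℕ) < t then -ε else 0) := by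
  unfold psum
  have : ∀ i : Fin n, (if (i:ℕ) < t then (x i + (if i = p then ε else 0) + (if i = q then -ε else 0)) else 0)
      = (if (i:ℕ) < t then x i else 0) + (if i = p then (if (p:ℕ) < t then ε else 0) else 0)
        + (if i = q then (if (q:ℕ) < t then -ε else 0) else 0) := by
    intro i
    by_cases h : (i:ℕ) < t
    · by_cases hip : i = p <;> by_cases hiq : i = q
      · subst hip; subst hiq; simp [h]
      · subst hip; simp [h, hiq]
      · subst hiq; simp [h, hip]
      · simp [h, hip, hiq]
    · have h2 : i ≠ p ∨ ¬ ((p:ℕ) < t) := by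
        by_cases hip : i = p
        · right; rw [← hip]; exact h
        · left; exact hip
      have h3 : i ≠ q ∨ ¬ ((q:ℕ) < t) := by
        by_cases hiq : i = q
        · right; rw [← hiq]; exact h
        · left; exact hiq
      rcases h2 with h2 | h2 <;> rcases h3 with h3 | h3 <;> simp [h, h2, h3]
  rw [Finset.sum_congr rfl (fun i _ => this i)]
  rw [Finset.sum_add_distrib, Finset.sum_add_distrib,
    Finset.sum_ite_eq' Finset.univ p, Finset.sum_ite_eq' Finset.univ q]
  simp

lemma sum_mid {n : ℕ} (x y : Fin n → ℝ) (s : Finset (Fin n)) :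
    ∑ i ∈ s, (x i + y i) / 2 = ((∑ i ∈ s, x i) + ∑ i ∈ s, y i) / 2 := by
  rw [← Finset.sum_add_distrib, Finset.sum_div]

theorem opt_unique {n : ℕ} {a l u L U : Fin n → ℝ} {C : ℝ} {x y : Fin n → ℝ}
    (ha : ∀ i, 0 < a i)
    (hx : qrapncOpt n a l u L U C x) (hy : qrapncOpt n a l u L U C y) : x = y := by
  by_contra hne
  obtain ⟨i0, hi0⟩ : ∃ i, x i ≠ y i := Function.ne_iff.mp hne
  set mid : Fin n → ℝ := fun i => (x i + y i) / 2 with hmid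
  have midfeas : qrapncFeas n l u L U C mid := by
    refine ⟨?_, fun k hk => ?_, fun i => ?_⟩
    · rw [hmid, sum_mid, hx.1.1, hy.1.1]; ring
    · have h1 := (hx.1.2.1 k hk); have h2 := (hy.1.2.1 k hk)
      rw [hmid, sum_mid]
      constructor <;> [linarith [h1.1, h2.1]; linarith [h1.2, h2.2]]
    · have h1 := hx.1.2.2 i; have h2 := hy.1.2.2 i
      constructor <;> [simp only [hmid]; simp only [hmid]] <;>
        [linarith [h1.1, h2.1]; linarith [h1.2, h2.2]]
  have hxy : qrapObj n a x = qrapObj n a y :=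
    le_antisymm (hx.2 y hy.1) (hy.2 x hx.1)
  have key : qrapObj n a x ≤ qrapObj n a mid := hx.2 mid midfeas
  have hiden : qrapObj n a x + qrapObj n a y - 2 * qrapObj n a mid
      = ∑ i, (x i - y i)^2 / (4 * a i) := by
    unfold qrapObj
    rw [Finset.mul_sum, ← Finset.sum_add_distrib, ← Finset.sum_sub_distrib]
    apply Finset.sum_congr rfl
    intro i _
    have hai : a i ≠ 0 := ne_of_gt (ha i)
    field_simp [hmid]
    ring
  have pos : 0 < ∑ i, (x i - y i)^2 / (4 * a i) := by
    apply Finset.sum_pos' (fun i _ => div_nonneg (sq_nonneg _) (by linarith [ha i]))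
    refine ⟨i0, Finset.mem_univ i0, div_pos ?_ (by linarith [ha i0])⟩
    have h0 : x i0 - y i0 ≠ 0 := sub_ne_zero.mpr hi0
    positivity
  linarith

theorem psum_mono {n : ℕ} {a l u L U : Fin n → ℝ} {A B : ℝ} {x y : Fin n → ℝ}
    (ha : ∀ i, 0 < a i)
    (hx : qrapncOpt n a l u L U A x) (hy : qrapncOpt n a l u L U B y) (hAB : A ≤ B) :
    ∀ t, t ≤ n → psum x t ≤ psum y t := by
  classical
  obtain ⟨z, hzdef⟩ : ∃ z : Fin n → ℝ, z = fun i : Fin n =>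
      min (psum x ((i:ℕ)+1)) (psum y ((i:ℕ)+1)) - min (psum x (i:ℕ)) (psum y (i:ℕ)) := ⟨_, rfl⟩
  obtain ⟨w, hwdef⟩ : ∃ w : Fin n → ℝ, w = fun i => x i + y i - z i := ⟨_, rfl⟩
  have hxn : ∀ k : Fin n, (k:ℕ)+1 < n → L k ≤ psum x ((k:ℕ)+1) ∧ psum x ((k:ℕ)+1) ≤ U k := by
    intro k hk; have := hx.1.2.1 k hk; rwa [sum_Iic] at this
  have hyn : ∀ k : Fin n, (k:ℕ)+1 < n → L k ≤ psum y ((k:ℕ)+1) ∧ psum y ((k:ℕ)+1) ≤ U k := by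
    intro k hk; have := hy.1.2.1 k hk; rwa [sum_Iic] at this
  have hz_psum : ∀ t, t ≤ n → psum z t = min (psum x t) (psum y t) := by
    intro t
    induction t with
    | zero => intro _; simp [psum_zero]
    | succ t ih =>
      intro ht
      have htn : t < n := by omega
      rw [psum_succ z t htn, ih (by omega)]
      have hzt : z ⟨t, htn⟩ = min (psum x (t+1)) (psum y (t+1)) - min (psum x t) (psum y t) := by
        rw [hzdef]
      rw [hzt]; ring
  have hbounds : ∀ i : Fin n, min (x i) (y i) ≤ z i ∧ z i ≤ max (x i) (y i) := by
    intro i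
    have h1 := psum_succ x (i:ℕ) i.isLt
    have h2 := psum_succ y (i:ℕ) i.isLt
    rw [Fin.eta] at h1 h2
    have hz : z i = min (psum x (i:ℕ) + x i) (psum y (i:ℕ) + y i)
        - min (psum x (i:ℕ)) (psum y (i:ℕ)) := by rw [hzdef, ← h1, ← h2]
    refine ⟨?_, ?_⟩ <;> rw [hz] <;> simp only [min_def, max_def] <;> split_ifs <;> linarith
  have zfeas : qrapncFeas n l u L U A z := by
    refine ⟨?_, fun k hk => ?_, fun i => ?_⟩
    · rw [← psum_univ, hz_psum n le_rfl, psum_univ, psum_univ, hx.1.1, hy.1.1]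
      exact min_eq_left hAB
    · rw [sum_Iic, hz_psum ((k:ℕ)+1) (by omega)]
      exact ⟨le_min (hxn k hk).1 (hyn k hk).1, le_trans (min_le_left _ _) (hxn k hk).2⟩
    · exact ⟨le_trans (le_min (hx.1.2.2 i).1 (hy.1.2.2 i).1) (hbounds i).1,
        le_trans (hbounds i).2 (max_le (hx.1.2.2 i).2 (hy.1.2.2 i).2)⟩
  have hw_psum : ∀ t, t ≤ n → psum w t = max (psum x t) (psum y t) := by
    intro t ht
    have h1 : psum w t = psum x t + psum y t - psum z t := by
      rw [hwdef]; exact psum_comb x y z t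
    rw [hz_psum t ht] at h1
    have h2 := min_add_max (psum x t) (psum y t)
    linarith
  have wfeas : qrapncFeas n l u L U B w := by
    refine ⟨?_, fun k hk => ?_, fun i => ?_⟩
    · rw [← psum_univ, hw_psum n le_rfl, psum_univ, psum_univ, hx.1.1, hy.1.1]
      exact max_eq_right hAB
    · rw [sum_Iic, hw_psum ((k:ℕ)+1) (by omega)]
      exact ⟨le_trans (hxn k hk).1 (le_max_left _ _), max_le (hxn k hk).2 (hyn k hk).2⟩
    · have hb := hbounds i
      have h2 := min_add_max (x i) (y i)
      have hw : w i = x i + y i - z i := by rw [hwdef]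
      constructor
      · have : min (x i) (y i) ≤ w i := by rw [hw]; linarith [hb.2]
        exact le_trans (le_min (hx.1.2.2 i).1 (hy.1.2.2 i).1) this
      · have : w i ≤ max (x i) (y i) := by rw [hw]; linarith [hb.1]
        exact le_trans this (max_le (hx.1.2.2 i).2 (hy.1.2.2 i).2)
  have hobj : qrapObj n a z + qrapObj n a w ≤ qrapObj n a x + qrapObj n a y := by
    unfold qrapObj
    rw [← Finset.sum_add_distrib, ← Finset.sum_add_distrib]
    apply Finset.sum_le_sum
    intro i _
    have hb := hbounds i
    have hw : w i = x i + y i - z i := by rw [hwdef]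
    have key : z i ^ 2 + w i ^ 2 ≤ x i ^ 2 + y i ^ 2 := by
      rw [hw]
      rcases le_total (x i) (y i) with h | h
      · have hb1 : x i ≤ z i := le_trans (by rw [min_eq_left h]) hb.1
        have hb2 : z i ≤ y i := le_trans hb.2 (by rw [max_eq_right h])
        nlinarith [mul_nonneg (sub_nonneg.2 hb1) (sub_nonneg.2 hb2)]
      · have hb1 : y i ≤ z i := le_trans (by rw [min_eq_right h]) hb.1
        have hb2 : z i ≤ x i := le_trans hb.2 (by rw [max_eq_left h])
        nlinarith [mul_nonneg (sub_nonneg.2 hb1) (sub_nonneg.2 hb2)]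
    have key2 : (1/2) * z i ^ 2 + (1/2) * w i ^ 2 ≤ (1/2) * x i ^ 2 + (1/2) * y i ^ 2 := by
      linarith
    calc (1/2) * z i ^ 2 / a i + (1/2) * w i ^ 2 / a i
        = ((1/2) * z i ^ 2 + (1/2) * w i ^ 2) / a i := by ring
      _ ≤ ((1/2) * x i ^ 2 + (1/2) * y i ^ 2) / a i :=
          (div_le_div_iff_of_pos_right (ha i)).mpr key2
      _ = (1/2) * x i ^ 2 / a i + (1/2) * y i ^ 2 / a i := by ring
  have h1 : qrapObj n a x ≤ qrapObj n a z := hx.2 z zfeas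
  have h2 : qrapObj n a y ≤ qrapObj n a w := hy.2 w wfeas
  have hzx : qrapObj n a z ≤ qrapObj n a x := by linarith
  have zopt : qrapncOpt n a l u L U A z := ⟨zfeas, fun v hv => le_trans hzx (hx.2 v hv)⟩
  have hzeq : z = x := opt_unique ha zopt hx
  intro t ht
  have hmin := hz_psum t ht
  rw [hzeq] at hmin
  calc psum x t = min (psum x t) (psum y t) := hmin
    _ ≤ psum y t := min_le_right _ _

set_option maxHeartbeats 1000000 in
theorem comp_mono {n : ℕ} {a l u L U : Fin n → ℝ} {A B : ℝ} {x y : Fin n → ℝ}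
    (ha : ∀ i, 0 < a i)
    (hx : qrapncOpt n a l u L U A x) (hy : qrapncOpt n a l u L U B y) (hAB : A ≤ B) :
    ∀ i, x i ≤ y i := by
  classical
  by_contra hcon
  push_neg at hcon
  obtain ⟨k, hk⟩ := hcon
  have hD := psum_mono ha hx hy hAB
  have hxn : ∀ k' : Fin n, (k':ℕ)+1 < n → L k' ≤ psum x ((k':ℕ)+1) ∧ psum x ((k':ℕ)+1) ≤ U k' := by
    intro k' hk'; have := hx.1.2.1 k' hk'; rwa [sum_Iic] at this
  have hyn : ∀ k' : Fin n, (k':ℕ)+1 < n → L k' ≤ psum y ((k':ℕ)+1) ∧ psum y ((k':ℕ)+1) ≤ U k' := by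
    intro k' hk'; have := hy.1.2.1 k' hk'; rwa [sum_Iic] at this
  obtain ⟨c, hcdef⟩ : ∃ c : ℕ, c = (k : ℕ) := ⟨_, rfl⟩
  have hcn : c < n := by rw [hcdef]; exact k.isLt
  have hfin : (⟨c, hcn⟩ : Fin n) = k := by
    apply Fin.ext; simp [hcdef]
  have hsxc : psum x (c+1) = psum x c + x k := by
    have h := psum_succ x c hcn; rwa [hfin] at h
  have hsyc : psum y (c+1) = psum y c + y k := by
    have h := psum_succ y c hcn; rwa [hfin] at h
  have hDc1 : psum y (c+1) - psum x (c+1) < psum y c - psum x c := by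
    rw [hsxc, hsyc]; linarith
  have hDc : 0 < psum y c - psum x c := by
    have h0 := hD (c+1) (by omega)
    linarith
  have hc1 : 1 ≤ c := by
    by_contra h
    have hc0 : c = 0 := by omega
    rw [hc0] at hDc
    simp [psum_zero] at hDc
  -- the largest index j ≤ c with D (j-1) < D c
  obtain ⟨Jset, hJdef⟩ : ∃ Js : Finset ℕ, Js = (Finset.Icc 1 c).filter
    (fun t => psum y (t-1) - psum x (t-1) < psum y c - psum x c) := ⟨_, rfl⟩
  have h1J : (1 : ℕ) ∈ Jset := by
    rw [hJdef]
    refine Finset.mem_filter.mpr ⟨Finset.mem_Icc.mpr ⟨le_rfl, hc1⟩, ?_⟩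
    simpa [psum_zero] using hDc
  have hJne : Jset.Nonempty := ⟨1, h1J⟩
  obtain ⟨j, hjdef⟩ : ∃ j : ℕ, j = Jset.max' hJne := ⟨_, rfl⟩
  have hjmem : j ∈ Jset := by rw [hjdef]; exact Jset.max'_mem hJne
  have hjmem' := hjmem
  rw [hJdef, Finset.mem_filter, Finset.mem_Icc] at hjmem'
  have hj1 : 1 ≤ j := hjmem'.1.1
  have hjc : j ≤ c := hjmem'.1.2
  have hjD : psum y (j-1) - psum x (j-1) < psum y c - psum x c := hjmem'.2
  have hjmax : ∀ t ∈ Jset, t ≤ j := by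
    intro t ht; rw [hjdef]; exact Finset.le_max' _ t ht
  have hDs : ∀ s, j ≤ s → s ≤ c → psum y c - psum x c ≤ psum y s - psum x s := by
    intro s hjs hsc
    rcases eq_or_lt_of_le hsc with rfl | hlt
    · exact le_rfl
    · by_contra hns
      push_neg at hns
      have hmem : s + 1 ∈ Jset := by
        rw [hJdef]
        refine Finset.mem_filter.mpr ⟨Finset.mem_Icc.mpr ⟨by omega, by omega⟩, ?_⟩
        simpa using hns
      have := hjmax _ hmem
      omega
  have hDpos : ∀ s, j ≤ s → s ≤ c → 0 < psum y s - psum x s :=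
    fun s h1 h2 => lt_of_lt_of_le hDc (hDs s h1 h2)
  have hjn : j - 1 < n := by omega
  obtain ⟨p, hpdef⟩ : ∃ p : Fin n, p = (⟨j-1, hjn⟩ : Fin n) := ⟨_, rfl⟩
  have hpv : (p : ℕ) = j - 1 := by rw [hpdef]
  have hsxj : psum x j = psum x (j-1) + x p := by
    have h := psum_succ x (j-1) hjn
    rw [show j-1+1 = j by omega] at h
    rwa [← hpdef] at h
  have hsyj : psum y j = psum y (j-1) + y p := by
    have h := psum_succ y (j-1) hjn
    rw [show j-1+1 = j by omega] at h
    rwa [← hpdef] at h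
  have hxp : x p < y p := by
    have h1 := hDs j le_rfl hjc
    rw [hsxj, hsyj] at h1
    linarith
  have hpc : (p:ℕ) < c := by omega
  have hpk : p ≠ k := by
    intro h
    rw [h, ← hcdef] at hpc
    omega
  -- epsilon
  have hIne : (Finset.Icc j c).Nonempty := Finset.nonempty_Icc.mpr hjc
  obtain ⟨δ, hδdef⟩ : ∃ d : ℝ,
    d = (Finset.Icc j c).inf' hIne (fun s => psum y s - psum x s) := ⟨_, rfl⟩
  have hδ : 0 < δ := by
    rw [hδdef, Finset.lt_inf'_iff]
    intro s hs
    have := Finset.mem_Icc.mp hs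
    exact hDpos s this.1 this.2
  obtain ⟨ε, hεdef⟩ : ∃ e : ℝ,
    e = (1/2) * min (min (x k - y k) (y p - x p)) δ := ⟨_, rfl⟩
  have hmin0 : 0 < min (min (x k - y k) (y p - x p)) δ :=
    lt_min (lt_min (by linarith) (by linarith)) hδ
  have hε0 : 0 < ε := by rw [hεdef]; linarith
  have hε1 : ε < x k - y k := by
    have h1 : min (min (x k - y k) (y p - x p)) δ ≤ x k - y k :=
      le_trans (min_le_left _ _) (min_le_left _ _)
    rw [hεdef]; linarith
  have hε2 : ε < y p - x p := by
    have h1 : min (min (x k - y k) (y p - x p)) δ ≤ y p - x p :=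
      le_trans (min_le_left _ _) (min_le_right _ _)
    rw [hεdef]; linarith
  have hε3 : ∀ s, j ≤ s → s ≤ c → ε ≤ psum y s - psum x s := by
    intro s h1 h2
    have hd : δ ≤ psum y s - psum x s := by
      rw [hδdef]
      exact Finset.inf'_le _ (Finset.mem_Icc.mpr ⟨h1, h2⟩)
    have h3 : min (min (x k - y k) (y p - x p)) δ ≤ δ := min_le_right _ _
    rw [hεdef]; linarith
  -- perturbed vectors
  obtain ⟨z, hzdef⟩ : ∃ z : Fin n → ℝ,
    z = fun i => x i + (if i = p then ε else 0) + (if i = k then -ε else 0) := ⟨_, rfl⟩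
  obtain ⟨w, hwdef⟩ : ∃ w : Fin n → ℝ,
    w = fun i => y i + (if i = k then ε else 0) + (if i = p then -ε else 0) := ⟨_, rfl⟩
  have hzp : z p = x p + ε := by rw [hzdef]; simp [hpk]
  have hzk : z k = x k - ε := by rw [hzdef]; simp [Ne.symm hpk]; ring
  have hzo : ∀ i, i ≠ p → i ≠ k → z i = x i := by
    intro i h1 h2; rw [hzdef]; simp [h1, h2]
  have hwp : w p = y p - ε := by rw [hwdef]; simp [hpk]; ring
  have hwk : w k = y k + ε := by rw [hwdef]; simp [Ne.symm hpk]
  have hwo : ∀ i, i ≠ p → i ≠ k → w i = y i := by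
    intro i h1 h2; rw [hwdef]; simp [h1, h2]
  have hzpsum : ∀ t, psum z t
      = psum x t + (if j-1 < t then ε else 0) + (if c < t then -ε else 0) := by
    intro t
    rw [hzdef]
    have h := psum_pert x p k ε t
    rwa [hpv, ← hcdef] at h
  have hwpsum : ∀ t, psum w t
      = psum y t + (if c < t then ε else 0) + (if j-1 < t then -ε else 0) := by
    intro t
    rw [hwdef]
    have h := psum_pert y k p ε t
    rwa [hpv, ← hcdef] at h
  have zfeas : qrapncFeas n l u L U A z := by
    refine ⟨?_, fun k' hk' => ?_, fun i => ?_⟩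
    · have h1 := hzpsum n
      rw [if_pos (by omega : j - 1 < n), if_pos hcn] at h1
      rw [← psum_univ, h1, psum_univ, hx.1.1]
      ring
    · rw [sum_Iic]
      have h1 := hzpsum ((k':ℕ)+1)
      have hb := hxn k' hk'
      by_cases hc2 : c < (k':ℕ)+1
      · rw [if_pos (by omega : j - 1 < (k':ℕ)+1), if_pos hc2] at h1
        rw [h1]
        constructor <;> linarith [hb.1, hb.2]
      · by_cases hj2 : j - 1 < (k':ℕ)+1
        · rw [if_pos hj2, if_neg hc2] at h1
          rw [h1]
          have hyb := hyn k' hk'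
          have hεs := hε3 ((k':ℕ)+1) (by omega) (by omega)
          constructor
          · linarith [hb.1]
          · linarith [hyb.2]
        · rw [if_neg hj2, if_neg hc2] at h1
          rw [h1]
          simp only [add_zero]
          exact hb
    · rcases eq_or_ne i p with hip | hip
      · rw [hip, hzp]
        have hb := hx.1.2.2 p
        have hb2 := hy.1.2.2 p
        constructor <;> linarith [hb.1, hb2.2, hε0, hε2]
      · rcases eq_or_ne i k with hik | hik
        · rw [hik, hzk]
          have hb := hx.1.2.2 k
          have hb2 := hy.1.2.2 k
          constructor <;> linarith [hb2.1, hb.2, hε0, hε1]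
        · rw [hzo i hip hik]
          exact hx.1.2.2 i
  have wfeas : qrapncFeas n l u L U B w := by
    refine ⟨?_, fun k' hk' => ?_, fun i => ?_⟩
    · have h1 := hwpsum n
      rw [if_pos (by omega : j - 1 < n), if_pos hcn] at h1
      rw [← psum_univ, h1, psum_univ, hy.1.1]
      ring
    · rw [sum_Iic]
      have h1 := hwpsum ((k':ℕ)+1)
      have hb := hyn k' hk'
      by_cases hc2 : c < (k':ℕ)+1
      · rw [if_pos hc2, if_pos (by omega : j - 1 < (k':ℕ)+1)] at h1
        rw [h1]
        constructor <;> linarith [hb.1, hb.2]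
      · by_cases hj2 : j - 1 < (k':ℕ)+1
        · rw [if_neg hc2, if_pos hj2] at h1
          rw [h1]
          have hxb := hxn k' hk'
          have hεs := hε3 ((k':ℕ)+1) (by omega) (by omega)
          constructor
          · linarith [hxb.1]
          · linarith [hb.2]
        · rw [if_neg hc2, if_neg hj2] at h1
          rw [h1]
          simp only [add_zero]
          exact hb
    · rcases eq_or_ne i p with hip | hip
      · rw [hip, hwp]
        have hb := hx.1.2.2 p
        have hb2 := hy.1.2.2 p
        constructor <;> linarith [hb.1, hb2.2, hε0, hε2, hxp]
      · rcases eq_or_ne i k with hik | hik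
        · rw [hik, hwk]
          have hb := hx.1.2.2 k
          have hb2 := hy.1.2.2 k
          constructor <;> linarith [hb2.1, hb.2, hε0, hε1]
        · rw [hwo i hip hik]
          exact hy.1.2.2 i
  -- strict objective decrease
  obtain ⟨g, hgdef⟩ : ∃ g : Fin n → ℝ, g = fun i =>
      (1/2) * (z i)^2 / a i + (1/2) * (w i)^2 / a i
      - (1/2) * (x i)^2 / a i - (1/2) * (y i)^2 / a i := ⟨_, rfl⟩
  have hsumg : qrapObj n a z + qrapObj n a w - qrapObj n a x - qrapObj n a y = ∑ i, g i := by
    unfold qrapObj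
    rw [hgdef, ← Finset.sum_add_distrib, ← Finset.sum_sub_distrib, ← Finset.sum_sub_distrib]
  have hgo : ∀ i ∈ Finset.univ, i ∉ ({p, k} : Finset (Fin n)) → g i = 0 := by
    intro i _ hi
    simp only [Finset.mem_insert, Finset.mem_singleton, not_or] at hi
    rw [hgdef]
    simp only
    rw [hzo i hi.1 hi.2, hwo i hi.1 hi.2]
    ring
  have hpair : ∑ i, g i = g p + g k := by
    rw [← Finset.sum_subset (Finset.subset_univ ({p, k} : Finset (Fin n))) hgo,
      Finset.sum_pair hpk]
  have hgp : g p < 0 := by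
    rw [hgdef]
    simp only
    rw [hzp, hwp]
    have hap := ha p
    have key : (1/2) * (x p + ε)^2 / a p + (1/2) * (y p - ε)^2 / a p
        - (1/2) * (x p)^2 / a p - (1/2) * (y p)^2 / a p
        = (ε^2 + ε * (x p - y p)) / a p := by
      field_simp
      ring
    rw [key]
    apply div_neg_of_neg_of_pos _ hap
    calc ε^2 + ε * (x p - y p) = ε * (ε + (x p - y p)) := by ring
      _ < 0 := mul_neg_of_pos_of_neg hε0 (by linarith)
  have hgk : g k < 0 := by
    rw [hgdef]
    simp only
    rw [hzk, hwk]
    have hak := ha k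
    have key : (1/2) * (x k - ε)^2 / a k + (1/2) * (y k + ε)^2 / a k
        - (1/2) * (x k)^2 / a k - (1/2) * (y k)^2 / a k
        = (ε^2 + ε * (y k - x k)) / a k := by
      field_simp
      ring
    rw [key]
    apply div_neg_of_neg_of_pos _ hak
    calc ε^2 + ε * (y k - x k) = ε * (ε + (y k - x k)) := by ring
      _ < 0 := mul_neg_of_pos_of_neg hε0 (by linarith)
  have h1 : qrapObj n a x ≤ qrapObj n a z := hx.2 z zfeas
  have h2 : qrapObj n a y ≤ qrapObj n a w := hy.2 w wfeas
  rw [hpair] at hsumg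
  linarith

lemma psum_castSucc {m : ℕ} (f : Fin (m+1) → ℝ) :
    ∀ t, t ≤ m → psum (fun i : Fin m => f i.castSucc) t = psum f t := by
  intro t
  induction t with
  | zero => intro _; rw [psum_zero, psum_zero]
  | succ t ih =>
    intro ht
    have htm : t < m := by omega
    rw [psum_succ _ t htm, psum_succ f t (by omega), ih (by omega)]
    rfl

end QRAPAux

theorem stmt_5 (m : ℕ) (hm : 1 ≤ m) (a l u L U : Fin (m+1) → ℝ) (C : ℝ)
    (ha : ∀ i, 0 < a i) (hlu : ∀ i, l i ≤ u i)
    (hC1 : L ⟨m - 1, by omega⟩ ≤ C) (hC2 : C ≤ U ⟨m - 1, by omega⟩)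
    (xL xU : Fin m → ℝ) (xC : Fin (m+1) → ℝ)
    (hxL : qrapncOpt m (a ∘ Fin.castSucc) (l ∘ Fin.castSucc) (u ∘ Fin.castSucc)
      (L ∘ Fin.castSucc) (U ∘ Fin.castSucc) (L ⟨m - 1, by omega⟩) xL)
    (hxU : qrapncOpt m (a ∘ Fin.castSucc) (l ∘ Fin.castSucc) (u ∘ Fin.castSucc)
      (L ∘ Fin.castSucc) (U ∘ Fin.castSucc) (U ⟨m - 1, by omega⟩) xU)
    (hxC : qrapncOpt (m+1) a l u L U C xC) :
    ∀ i : Fin m, xL i ≤ xC i.castSucc ∧ xC i.castSucc ≤ xU i := by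
  classical
  have ha' : ∀ i : Fin m, 0 < (a ∘ Fin.castSucc) i := fun i => ha _
  set km : Fin (m+1) := ⟨m - 1, by omega⟩ with hkm
  have hkmv : (km : ℕ) + 1 = m := by simp [hkm]; omega
  set xP : Fin m → ℝ := fun i => xC i.castSucc with hxP
  set A : ℝ := ∑ i, xP i with hA
  have hPC : ∀ t, t ≤ m → QRAPAux.psum xP t = QRAPAux.psum xC t := fun t ht => QRAPAux.psum_castSucc xC t ht
  have hApsum : A = QRAPAux.psum xC m := by rw [hA, ← QRAPAux.psum_univ, hPC m le_rfl]
  -- bounds on A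
  have hAb := hxC.1.2.1 km (by omega)
  rw [QRAPAux.sum_Iic, hkmv, ← hApsum] at hAb
  -- xP is feasible for the m-problem at level A
  have hPfeas : qrapncFeas m (l ∘ Fin.castSucc) (u ∘ Fin.castSucc)
      (L ∘ Fin.castSucc) (U ∘ Fin.castSucc) A xP := by
    refine ⟨hA.symm, fun k hk => ?_, fun i => hxC.1.2.2 i.castSucc⟩
    have hcast : ((k.castSucc : Fin (m+1)) : ℕ) = (k : ℕ) := rfl
    have hb := hxC.1.2.1 k.castSucc (by omega)
    rw [QRAPAux.sum_Iic, hcast] at hb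
    rw [QRAPAux.sum_Iic, hPC ((k:ℕ)+1) (by omega)]
    exact hb
  -- xP is optimal for the m-problem at level A
  have hsplit : ∀ v : Fin (m+1) → ℝ, qrapObj (m+1) a v
      = qrapObj m (a ∘ Fin.castSucc) (fun i => v i.castSucc)
        + (1/2) * (v (Fin.last m))^2 / a (Fin.last m) := by
    intro v
    unfold qrapObj
    rw [Fin.sum_univ_castSucc]
    rfl
  have hPopt : qrapncOpt m (a ∘ Fin.castSucc) (l ∘ Fin.castSucc) (u ∘ Fin.castSucc)
      (L ∘ Fin.castSucc) (U ∘ Fin.castSucc) A xP := by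
    refine ⟨hPfeas, fun y hy => ?_⟩
    set Y : Fin (m+1) → ℝ := Fin.snoc y (xC (Fin.last m)) with hY
    have hYc : (fun i : Fin m => Y i.castSucc) = y := by
      funext i; rw [hY]; exact Fin.snoc_castSucc _ _ _
    have hYpsum : ∀ t, t ≤ m → QRAPAux.psum Y t = QRAPAux.psum y t := by
      intro t ht
      rw [← QRAPAux.psum_castSucc Y t ht, hYc]
    have hCsum : ∑ i, xC i = C := hxC.1.1
    have hCsplit : A + xC (Fin.last m) = C := by
      rw [← hCsum, Fin.sum_univ_castSucc, hA]
    have hYfeas : qrapncFeas (m+1) l u L U C Y := by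
      refine ⟨?_, fun k hk => ?_, fun i => ?_⟩
      · rw [Fin.sum_univ_castSucc]
        have h1 : ∑ i : Fin m, Y i.castSucc = ∑ i, y i := by rw [← hYc]
        rw [h1, hy.1, hY, Fin.snoc_last]
        exact hCsplit
      · have hkm2 : (k : ℕ) < m := by omega
        rw [QRAPAux.sum_Iic, hYpsum ((k:ℕ)+1) (by omega)]
        by_cases hke : (k : ℕ) + 1 = m
        · have hkkm : k = km := by
            apply Fin.ext; simp [hkm]; omega
          have hyA : QRAPAux.psum y ((k:ℕ)+1) = A := by
            rw [hke, QRAPAux.psum_univ, hy.1]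
          rw [hyA, hkkm]
          exact hAb
        · set k' : Fin m := ⟨(k:ℕ), hkm2⟩ with hk'
          have hb := hy.2.1 k' (by simp [hk']; omega)
          rw [QRAPAux.sum_Iic] at hb
          have hcast2 : k'.castSucc = k := by apply Fin.ext; simp [hk']
          have hLk : (L ∘ Fin.castSucc) k' = L k := by rw [Function.comp, hcast2]
          have hUk : (U ∘ Fin.castSucc) k' = U k := by rw [Function.comp, hcast2]
          rw [hLk, hUk] at hb
          exact hb
      · refine Fin.lastCases ?_ ?_ i
        · rw [hY, Fin.snoc_last]
          exact hxC.1.2.2 (Fin.last m)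
        · intro i'
          have : Y i'.castSucc = y i' := by rw [hY]; exact Fin.snoc_castSucc _ _ _
          rw [this]
          exact hy.2.2 i'
    have hobjle := hxC.2 Y hYfeas
    have h1 := hsplit xC
    have h2 := hsplit Y
    have h3 : (fun i : Fin m => xC i.castSucc) = xP := rfl
    have h4 : Y (Fin.last m) = xC (Fin.last m) := by rw [hY]; exact Fin.snoc_last _ _
    rw [h3] at h1
    rw [hYc, h4] at h2
    rw [h1, h2] at hobjle
    linarith
  have h1 := QRAPAux.comp_mono ha' hxL hPopt hAb.1
  have h2 := QRAPAux.comp_mono ha' hPopt hxU hAb.2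
  exact fun i => ⟨h1 i, h2 i⟩
end

section
/- Fix $j \ge 1$ and feasible QRAP-NC data. Let $x^j(L_j)$ and $x^j(U_j)$ be the unique optimal solutions of QRAP-NC$^j(L_j)$ and QRAP-NC$^j(U_j)$ respectively. If a vector $y \in \mathbb{R}^j$ satisfies $x^j_i(L_j) \le y_i \le x^j_i(U_j)$ for all $i \le j$, then $L_k \le \sum_{i=1}^k y_i \le U_k$ for all $k \le j$. -/
theorem stmt_6 (m : ℕ) (a l u L U : Fin (m+1) → ℝ)
    (ha : ∀ i, 0 < a i) (hlu : ∀ i, l i ≤ u i)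
    (xL xU : Fin (m+1) → ℝ)
    (hxL : qrapncOpt (m+1) a l u L U (L (Fin.last m)) xL)
    (hxU : qrapncOpt (m+1) a l u L U (U (Fin.last m)) xU)
    (y : Fin (m+1) → ℝ) (hy : ∀ i, xL i ≤ y i ∧ y i ≤ xU i) :
    ∀ k : Fin (m+1), L k ≤ ∑ i ∈ Finset.Iic k, y i ∧ ∑ i ∈ Finset.Iic k, y i ≤ U k := by
  intro k
  obtain ⟨⟨hLsum, hLnest, _⟩, _⟩ := hxL
  obtain ⟨⟨hUsum, hUnest, _⟩, _⟩ := hxU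
  have h1 : ∑ i ∈ Finset.Iic k, xL i ≤ ∑ i ∈ Finset.Iic k, y i :=
    Finset.sum_le_sum fun i _ => (hy i).1
  have h2 : ∑ i ∈ Finset.Iic k, y i ≤ ∑ i ∈ Finset.Iic k, xU i :=
    Finset.sum_le_sum fun i _ => (hy i).2
  rcases eq_or_lt_of_le (Fin.le_last k) with hk | hk
  · subst hk
    have hiic : Finset.Iic (Fin.last m) = Finset.univ := by
      ext i; simp [Fin.le_last]
    rw [hiic] at h1 h2 ⊢
    rw [hLsum] at h1
    rw [hUsum] at h2
    exact ⟨h1, h2⟩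
  · have hk' : (k : ℕ) + 1 < m + 1 := by
      have := Fin.lt_iff_val_lt_val.mp hk
      simpa [Fin.last] using this
    exact ⟨le_trans (hLnest k hk').1 h1, le_trans h2 (hUnest k hk').2⟩
end

section
/- Let $x^n(R)$ be the unique optimal solution of QRAP-NC, and for $j < n$ suppose both nested constraints at index $j$ are slack, i.e., $L_j < \sum_{i\le j} x^n_i(R) < U_j$. Suppose also $L_j < U_j$ for all $j < n$. Then there exists at least one index $i' \le j$ such that $x^{j}_{i'}(L_j) < x^n_{i'}(R)$, where $x^j(L_j)$ is the unique optimal solution of QRAP-NC$^j(L_j)$; consequently $\sum_{i \le j} x^j_i(L_j) = L_j < \sum_{i\le j} x^n_i(R)$. -/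
theorem stmt_14 (n : ℕ) (a l u L U : Fin n → ℝ) (R : ℝ)
    (ha : ∀ i, 0 < a i) (hlu : ∀ i, l i ≤ u i)
    (hLU : ∀ k : Fin n, (k : ℕ) + 1 < n → L k < U k)
    (xstar : Fin n → ℝ)
    (hxstar : qrapncOpt n a l u L U R xstar)
    (hxuniq : ∀ y, qrapncOpt n a l u L U R y → y = xstar)
    (j : Fin n) (hj : (j : ℕ) + 1 < n)
    (hslackL : L j < ∑ i ∈ Finset.Iic j, xstar i)
    (hslackU : ∑ i ∈ Finset.Iic j, xstar i < U j)
    (xL : Fin ((j : ℕ) + 1) → ℝ)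
    (hxL : qrapncOpt ((j : ℕ) + 1)
      (fun i => a (Fin.castLE (by omega) i)) (fun i => l (Fin.castLE (by omega) i))
      (fun i => u (Fin.castLE (by omega) i)) (fun i => L (Fin.castLE (by omega) i))
      (fun i => U (Fin.castLE (by omega) i)) (L j) xL) :
    (∃ i' : Fin ((j : ℕ) + 1), xL i' < xstar (Fin.castLE (by omega) i')) ∧
    (∑ i, xL i = L j ∧ L j < ∑ i ∈ Finset.Iic j, xstar i) := by
  have hsum : ∑ i, xL i = L j := hxL.1.1
  have hIic : ∑ i ∈ Finset.Iic j, xstar i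
      = ∑ i : Fin ((j : ℕ) + 1), xstar (Fin.castLE (by omega) i) := by
    refine Finset.sum_bij
      (fun (i : Fin n) (hi : i ∈ Finset.Iic j) => (⟨(i : ℕ), by
        simp only [Finset.mem_Iic, Fin.le_def] at hi; omega⟩ : Fin ((j : ℕ) + 1)))
      (fun i hi => Finset.mem_univ _) ?_ ?_ ?_
    · intro i hi i2 hi2 h
      simp only [Fin.mk.injEq] at h
      exact Fin.ext h
    · intro b _
      refine ⟨⟨(b : ℕ), by omega⟩, by
        simp only [Finset.mem_Iic, Fin.le_def]; omega, rfl⟩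
    · intro i hi; rfl
  refine ⟨?_, hsum, hslackL⟩
  by_contra h
  push_neg at h
  have : ∑ i : Fin ((j : ℕ) + 1), xstar (Fin.castLE (by omega) i) ≤ ∑ i, xL i :=
    Finset.sum_le_sum fun i _ => h i
  rw [hsum, ← hIic] at this
  linarith
end

section
/- Let $x^n(R)$ be the unique optimal solution of QRAP-NC and suppose the nested constraint at index $j_p$ is tight with value $V_{j_p} \in \{L_{j_p}, U_{j_p}\}$, i.e., $\sum_{i \le j_p} x^n_i(R) = V_{j_p}$. Then the truncated vector $(x^n_1(R), \dots, x^n_{j_p}(R))$ is the unique optimal solution of the restricted subproblem QRAP-NC$^{j_p}(V_{j_p})$. -/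
/-!
If the optimum `x` meets the nested bound at `j` with equality, then any feasible point `y` of the
problem restricted to the first `j + 1` variables with resource `∑_{i ≤ j} x i` can be spliced
into `x` in place of its first `j + 1` entries: the prefix sums up to `j` are those of `y`, and
from `j` on they are those of `x`, because the total of the prefix is unchanged. The objective is
separable, so splicing changes the cost by exactly the change of the restricted cost. Hence the
prefix of `x` is restricted-optimal, and splicing a restricted optimum into `x` gives a global
optimum, which is `x` by uniqueness.
-/

open Finset

theorem Finset.sum_congr_of_sum_eq_of_eqOn_sdiff {β M : Type*} [DecidableEq β] [AddCommMonoid M]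
    {s t : Finset β} {f g : β → M} (hts : t ⊆ s) (ht : ∑ i ∈ t, f i = ∑ i ∈ t, g i)
    (hfg : ∀ i ∈ s \ t, f i = g i) : ∑ i ∈ s, f i = ∑ i ∈ s, g i := by
  rw [← sum_sdiff hts, ← sum_sdiff hts (f := g), ht, sum_congr rfl hfg]

section Prefix

variable {n : ℕ} {α : Type*}

theorem Fin.sum_take_eq_sum_Iic {M : Type*} [AddCommMonoid M] (j : Fin n) (f : Fin n → M) :
    ∑ i, Fin.take (j + 1) j.isLt f i = ∑ i ∈ Iic j, f i := by
  rw [← Iic_top]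
  exact (Fin.sum_Iic_castLE j.isLt f ⊤).symm

def splicePrefix (j : Fin n) (y : Fin (j + 1) → α) (x : Fin n → α) : Fin n → α :=
  fun i => if hi : i ≤ j then y ⟨i, Nat.lt_succ_of_le hi⟩ else x i

variable (j : Fin n) (y : Fin (j + 1) → α) (x : Fin n → α)

@[simp]
theorem take_splicePrefix : Fin.take (j + 1) j.isLt (splicePrefix j y x) = y := by
  funext i
  exact dif_pos (Nat.le_of_lt_succ i.isLt)

theorem splicePrefix_of_not_le {i : Fin n} (hi : ¬ i ≤ j) : splicePrefix j y x i = x i :=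
  dif_neg hi

end Prefix

section Restriction

variable {n : ℕ} {a l u L U : Fin n → ℝ} {R : ℝ} {x : Fin n → ℝ} (j : Fin n)

local notation "↾" v => Fin.take (j + 1) j.isLt v

theorem qrapObj_eq_take_add (a x : Fin n → ℝ) :
    qrapObj n a x = qrapObj (j + 1) (↾a) (↾x) + ∑ i ∈ (Iic j)ᶜ, (1/2) * (x i)^2 / a i := by
  unfold qrapObj
  rw [← sum_add_sum_compl (Iic j), ← Fin.sum_take_eq_sum_Iic j]
  rfl

theorem qrapObj_splicePrefix_sub (a : Fin n → ℝ) (y : Fin (j + 1) → ℝ) (x : Fin n → ℝ) :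
    qrapObj n a (splicePrefix j y x) - qrapObj n a x
      = qrapObj (j + 1) (↾a) y - qrapObj (j + 1) (↾a) (↾x) := by
  rw [qrapObj_eq_take_add j a (splicePrefix j y x), qrapObj_eq_take_add j a x,
    take_splicePrefix, sum_congr rfl fun i hi => by
      rw [splicePrefix_of_not_le j y x (by simpa using hi)]]
  ring

theorem qrapncFeas.take (hx : qrapncFeas n l u L U R x) :
    qrapncFeas (j + 1) (↾l) (↾u) (↾L) (↾U) (∑ i ∈ Iic j, x i) (↾x) := by
  refine ⟨Fin.sum_take_eq_sum_Iic j x, fun k hk => ?_, fun i => hx.2.2 _⟩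
  have hk' := hx.2.1 (Fin.castLE j.isLt k) (by simp; omega)
  rwa [Fin.sum_Iic_castLE] at hk'

theorem qrapncFeas.splice {y : Fin (j + 1) → ℝ} (hx : qrapncFeas n l u L U R x)
    (hy : qrapncFeas (j + 1) (↾l) (↾u) (↾L) (↾U) (∑ i ∈ Iic j, x i) y) :
    qrapncFeas n l u L U R (splicePrefix j y x) := by
  have hprefix (k : Fin (j + 1)) :
      ∑ i ∈ Iic (Fin.castLE j.isLt k), splicePrefix j y x i = ∑ i ∈ Iic k, y i := by
    rw [Fin.sum_Iic_castLE]
    exact congrArg (fun z => ∑ i ∈ Iic k, z i) (take_splicePrefix j y x)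
  have hsuffix {s : Finset (Fin n)} (hs : Iic j ⊆ s) :
      ∑ i ∈ s, splicePrefix j y x i = ∑ i ∈ s, x i := by
    refine sum_congr_of_sum_eq_of_eqOn_sdiff hs ?_ fun i hi => ?_
    · rw [← Fin.sum_take_eq_sum_Iic, take_splicePrefix, hy.1]
    · exact splicePrefix_of_not_le j y x (by simpa using (mem_sdiff.1 hi).2)
  refine ⟨by rw [hsuffix (subset_univ _)]; exact hx.1, fun k hk => ?_, fun i => ?_⟩
  · by_cases hjk : j ≤ k
    · rw [hsuffix (Iic_subset_Iic.2 hjk)]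
      exact hx.2.1 k hk
    · have hk' := hy.2.1 ⟨k, by omega⟩ (by simp; omega)
      rwa [← hprefix] at hk'
  · unfold splicePrefix
    split_ifs with hij
    exacts [hy.2.2 ⟨i, Nat.lt_succ_of_le hij⟩, hx.2.2 i]

theorem qrapncOpt.take (hx : qrapncOpt n a l u L U R x) :
    qrapncOpt (j + 1) (↾a) (↾l) (↾u) (↾L) (↾U) (∑ i ∈ Iic j, x i) (↾x) := by
  refine ⟨hx.1.take j, fun y hy => ?_⟩
  have hx_le := hx.2 _ (hx.1.splice j hy)
  have hswap := qrapObj_splicePrefix_sub j a y x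
  linarith

theorem qrapncOpt.splice {y : Fin (j + 1) → ℝ} (hx : qrapncOpt n a l u L U R x)
    (hy : qrapncOpt (j + 1) (↾a) (↾l) (↾u) (↾L) (↾U) (∑ i ∈ Iic j, x i) y) :
    qrapncOpt n a l u L U R (splicePrefix j y x) := by
  refine ⟨hx.1.splice j hy.1, fun w hw => ?_⟩
  have hy_le := hy.2 _ (hx.1.take j)
  have hx_le := hx.2 w hw
  have hswap := qrapObj_splicePrefix_sub j a y x
  linarith

end Restriction

theorem stmt_19 (n : ℕ) (a l u L U : Fin n → ℝ) (R : ℝ)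
    (xstar : Fin n → ℝ)
    (hxstar : qrapncOpt n a l u L U R xstar)
    (hxuniq : ∀ y, qrapncOpt n a l u L U R y → y = xstar)
    (j : Fin n)
    (V : ℝ)
    (htight : ∑ i ∈ Finset.Iic j, xstar i = V) :
    qrapncOpt ((j : ℕ) + 1)
      (fun i => a (Fin.castLE (by omega) i)) (fun i => l (Fin.castLE (by omega) i))
      (fun i => u (Fin.castLE (by omega) i)) (fun i => L (Fin.castLE (by omega) i))
      (fun i => U (Fin.castLE (by omega) i)) V
      (fun i => xstar (Fin.castLE (by omega) i)) ∧
    ∀ y : Fin ((j : ℕ) + 1) → ℝ,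
      qrapncOpt ((j : ℕ) + 1)
        (fun i => a (Fin.castLE (by omega) i)) (fun i => l (Fin.castLE (by omega) i))
        (fun i => u (Fin.castLE (by omega) i)) (fun i => L (Fin.castLE (by omega) i))
        (fun i => U (Fin.castLE (by omega) i)) V y →
      y = fun i => xstar (Fin.castLE (by omega) i) := by
  subst htight
  refine ⟨hxstar.take j, fun y hy => ?_⟩
  calc y = Fin.take (j + 1) j.isLt (splicePrefix j y xstar) := (take_splicePrefix j y xstar).symm
    _ = Fin.take (j + 1) j.isLt xstar := by rw [hxuniq _ (hxstar.splice j hy)]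
end
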